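/- arXiv:1308.0521 — 3 statements merged into one kernel-verified Lean document; each statement's English description precedes it below -/
import Mathlib

section
/- Let X₁, X₂ be independent St. Petersburg random variables. Then for integers 1 ≤ k < ℓ, P{X₁ + X₂ > 2^k + 2^ℓ} = 2·2^{-ℓ} + 2·2^{-(ℓ+k)} - 4·2^{-2ℓ}, and for k = ℓ, P{X₁ + X₂ > 2^ℓ + 2^ℓ} = 2·2^{-ℓ} - 2^{-2ℓ}. -/
/-!
Each `Xᵢ` has law `∑ⱼ 2⁻ʲ δ_{2ʲ}`, because its atoms `2ʲ` already carry total mass one, and by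
independence `(X₁, X₂)` has the product law. Almost surely both coordinates are powers of two, and
for such `x, y` and `k ≤ ℓ` the event `2ᵏ + 2ˡ < x + y` is the disjoint union of the rectangles
`{x > 2ˡ}`, `{x ≤ 2ˡ < y}`, `{x = 2ˡ, 2ᵏ < y ≤ 2ˡ}` and `{2ᵏ < x < 2ˡ, y = 2ˡ}`, whose
probabilities are products of the tails `P(X > 2ᵐ) = 2⁻ᵐ` and atoms `P(X = 2ᵐ) = 2⁻ᵐ`.
-/

open MeasureTheory ProbabilityTheory
open scoped ENNReal
open Set

namespace MeasureTheory.Measure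

theorem eq_sum_smul_dirac_of_tsum_eq_measure_univ {α ι : Type*} [MeasurableSpace α]
    [MeasurableSingletonClass α] [Countable ι] {ρ : Measure α} [IsFiniteMeasure ρ]
    {x : ι → α} (hx : Function.Injective x) (h : ∑' i, ρ {x i} = ρ univ) :
    ρ = sum fun i => ρ {x i} • dirac (x i) := by
  have hrestrict : ρ.restrict (range x) = sum fun i => ρ {x i} • dirac (x i) := by
    rw [← iUnion_singleton_eq_range, restrict_iUnion
      (fun i j hij => disjoint_singleton.2 (hx.ne hij)) fun _ => measurableSet_singleton _]
    simp_rw [restrict_singleton]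
  have hrange : ρ (range x) = ρ univ := by
    rw [← restrict_apply_univ, hrestrict, sum_apply_of_countable, ← h]
    simp
  rw [← hrestrict, restrict_eq_self_of_ae_mem]
  exact (ae_iff_measure_eq (countable_range x).measurableSet.nullMeasurableSet).2 hrange

end MeasureTheory.Measure

theorem ENNReal.tsum_ite_le_inv_two_pow (m : ℕ) :
    ∑' j : ℕ, (if m ≤ j then (2⁻¹ : ℝ≥0∞) ^ (j + 1) else 0) = 2⁻¹ ^ m := by
  set f : ℕ → ℝ≥0∞ := fun j => if m ≤ j then 2⁻¹ ^ (j + 1) else 0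
  have htail : HasSum (fun n => f (n + m)) (2⁻¹ ^ m) := by
    have h := ENNReal.summable.hasSum (f := fun n : ℕ => (2⁻¹ : ℝ≥0∞) ^ (n + 1) * 2⁻¹ ^ m)
    rw [ENNReal.tsum_mul_right, ENNReal.tsum_geometric_add_one, ENNReal.one_sub_inv_two, inv_inv,
      ENNReal.inv_mul_cancel two_ne_zero ENNReal.ofNat_ne_top, one_mul] at h
    simpa only [f, Nat.le_add_left, if_true, add_right_comm _ m, pow_add _ _ m] using h
  have hhead : ∑ i ∈ Finset.range m, f i = 0 :=
    Finset.sum_eq_zero fun i hi => if_neg (Finset.mem_range.1 hi).not_ge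
  rw [htail.sum_range_add.tsum_eq, hhead, zero_add]

theorem two_mul_two_pow_le_or_eq_or_le (p ℓ : ℕ) :
    2 * (2 : ℝ) ^ p ≤ 2 ^ ℓ ∨ (2 : ℝ) ^ p = 2 ^ ℓ ∨ 2 * (2 : ℝ) ^ ℓ ≤ 2 ^ p := by
  rcases lt_trichotomy p ℓ with h | rfl | h
  · exact Or.inl (pow_succ' (2 : ℝ) p ▸ pow_le_pow_right₀ one_le_two h)
  · exact Or.inr (Or.inl rfl)
  · exact Or.inr (Or.inr (pow_succ' (2 : ℝ) ℓ ▸ pow_le_pow_right₀ one_le_two h))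

theorem lt_add_iff_of_dyadic {a b x y : ℝ} (ha : 0 < a) (hab : a ≤ b) (hx : 0 < x) (hy : 0 < y)
    (hxb : 2 * x ≤ b ∨ x = b ∨ 2 * b ≤ x) (hyb : 2 * y ≤ b ∨ y = b ∨ 2 * b ≤ y) :
    a + b < x + y ↔
      b < x ∨ (x ≤ b ∧ b < y) ∨ (x = b ∧ a < y ∧ y ≤ b) ∨ (a < x ∧ x < b ∧ y = b) := by
  grind

theorem prod_real_two_pow_add_two_pow_lt_add {μ₁ μ₂ : Measure ℝ} [IsProbabilityMeasure μ₁]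
    [IsProbabilityMeasure μ₂] (h₁ : ∀ᵐ x ∂μ₁, ∃ p : ℕ, x = 2 ^ p)
    (h₂ : ∀ᵐ y ∂μ₂, ∃ q : ℕ, y = 2 ^ q) {k ℓ : ℕ} (hkℓ : k ≤ ℓ) :
    (μ₁.prod μ₂).real {z | 2 ^ k + 2 ^ ℓ < z.1 + z.2} =
      μ₁.real (Ioi (2 ^ ℓ)) + μ₁.real (Iic (2 ^ ℓ)) * μ₂.real (Ioi (2 ^ ℓ))
        + μ₁.real {2 ^ ℓ} * μ₂.real (Ioc (2 ^ k) (2 ^ ℓ))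
        + μ₁.real (Ioo (2 ^ k) (2 ^ ℓ)) * μ₂.real {2 ^ ℓ} := by
  have hae : {z : ℝ × ℝ | 2 ^ k + 2 ^ ℓ < z.1 + z.2} =ᵐ[μ₁.prod μ₂]
      (Ioi (2 ^ ℓ) ×ˢ univ ∪ Iic (2 ^ ℓ) ×ˢ Ioi (2 ^ ℓ) ∪ {2 ^ ℓ} ×ˢ Ioc (2 ^ k) (2 ^ ℓ)
        ∪ Ioo (2 ^ k) (2 ^ ℓ) ×ˢ {2 ^ ℓ} : Set (ℝ × ℝ)) := by
    refine Filter.eventuallyEq_set.2 ?_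
    filter_upwards [Measure.quasiMeasurePreserving_fst.ae h₁,
      Measure.quasiMeasurePreserving_snd.ae h₂] with z ⟨p, hp⟩ ⟨q, hq⟩
    simp only [mem_union, mem_prod, mem_Ioi, mem_Iic, mem_Ioc, mem_Ioo, mem_singleton_iff,
      mem_univ, and_true, and_assoc, or_assoc]
    exact lt_add_iff_of_dyadic (by positivity) (pow_le_pow_right₀ one_le_two hkℓ)
      (hp ▸ by positivity) (hq ▸ by positivity)
      (hp ▸ two_mul_two_pow_le_or_eq_or_le p ℓ) (hq ▸ two_mul_two_pow_le_or_eq_or_le q ℓ)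
  rw [measureReal_congr hae, measureReal_union, measureReal_union, measureReal_union]
  · simp only [measureReal_prod_prod, probReal_univ, mul_one]
  all_goals first
    | measurability
    | (rw [Set.disjoint_left]; grind)

noncomputable def stPetersburg : Measure ℝ :=
  Measure.sum fun j : ℕ => (2⁻¹ : ℝ≥0∞) ^ (j + 1) • Measure.dirac ((2 : ℝ) ^ (j + 1))

theorem stPetersburg_apply (s : Set ℝ) :
    stPetersburg s = ∑' j : ℕ, 2⁻¹ ^ (j + 1) * s.indicator 1 ((2 : ℝ) ^ (j + 1)) := by
  simp [stPetersburg, Measure.sum_apply_of_countable, Measure.dirac_apply]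

theorem stPetersburg_Ioi (m : ℕ) : stPetersburg (Ioi (2 ^ m)) = 2⁻¹ ^ m := by
  rw [stPetersburg_apply, ← ENNReal.tsum_ite_le_inv_two_pow]
  simp [indicator_apply, pow_lt_pow_iff_right₀ (one_lt_two (α := ℝ))]

instance : IsProbabilityMeasure stPetersburg :=
  ⟨by simpa [stPetersburg_apply] using ENNReal.tsum_ite_le_inv_two_pow 0⟩

theorem stPetersburg_singleton {m : ℕ} (hm : 1 ≤ m) : stPetersburg {2 ^ m} = 2⁻¹ ^ m := by
  obtain ⟨n, rfl⟩ := Nat.exists_eq_add_of_le' hm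
  rw [stPetersburg_apply, tsum_eq_single n]
  · simp
  · intro j hj
    simp [hj]

theorem ae_stPetersburg_exists_eq_two_pow : ∀ᵐ x ∂stPetersburg, ∃ p : ℕ, x = 2 ^ p := by
  rw [ae_iff, stPetersburg_apply]
  simp

theorem map_eq_stPetersburg {Ω : Type*} [MeasurableSpace Ω] {μ : Measure Ω}
    [IsProbabilityMeasure μ] {X : Ω → ℝ} (hX : Measurable X)
    (hpmf : ∀ k : ℕ, 1 ≤ k → μ {ω | X ω = 2 ^ k} = 1 / 2 ^ k) :
    μ.map X = stPetersburg := by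
  have : IsProbabilityMeasure (μ.map X) := Measure.isProbabilityMeasure_map hX.aemeasurable
  have hatom (j : ℕ) : μ.map X {(2 : ℝ) ^ (j + 1)} = 2⁻¹ ^ (j + 1) := by
    rw [Measure.map_apply hX (measurableSet_singleton _), ← ENNReal.inv_pow, ← one_div,
      ← hpmf (j + 1) (by omega)]
    rfl
  have hinj : Function.Injective fun j : ℕ => (2 : ℝ) ^ (j + 1) := fun i j h => by
    simpa using h
  refine (Measure.eq_sum_smul_dirac_of_tsum_eq_measure_univ hinj ?_).trans ?_ <;>
    simp_rw [hatom]
  · simpa using ENNReal.tsum_ite_le_inv_two_pow 0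
  · rfl

theorem stPetersburg_real_Ioi (m : ℕ) : stPetersburg.real (Ioi (2 ^ m)) = 2⁻¹ ^ m := by
  simp [measureReal_def, stPetersburg_Ioi]

theorem stPetersburg_real_Iic (m : ℕ) : stPetersburg.real (Iic (2 ^ m)) = 1 - 2⁻¹ ^ m := by
  rw [← compl_Ioi, probReal_compl_eq_one_sub measurableSet_Ioi, stPetersburg_real_Ioi]

theorem stPetersburg_real_singleton {m : ℕ} (hm : 1 ≤ m) :
    stPetersburg.real {2 ^ m} = 2⁻¹ ^ m := by
  simp [measureReal_def, stPetersburg_singleton hm]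

theorem stPetersburg_real_Ioc {k ℓ : ℕ} (h : k ≤ ℓ) :
    stPetersburg.real (Ioc (2 ^ k) (2 ^ ℓ)) = 2⁻¹ ^ k - 2⁻¹ ^ ℓ := by
  rw [← Ioi_sdiff_Ioi, measureReal_sdiff (Ioi_subset_Ioi (pow_le_pow_right₀ one_le_two h))
    measurableSet_Ioi, stPetersburg_real_Ioi, stPetersburg_real_Ioi]

theorem stPetersburg_real_Ioo {k ℓ : ℕ} (h : k < ℓ) :
    stPetersburg.real (Ioo (2 ^ k) (2 ^ ℓ)) = 2⁻¹ ^ k - 2 * 2⁻¹ ^ ℓ := by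
  have hmem : (2 : ℝ) ^ ℓ ∈ Ioc (2 ^ k) (2 ^ ℓ) := ⟨pow_lt_pow_right₀ one_lt_two h, le_rfl⟩
  rw [← Ioc_sdiff_right, measureReal_sdiff (singleton_subset_iff.2 hmem)
      (measurableSet_singleton _), stPetersburg_real_Ioc h.le,
    stPetersburg_real_singleton (by omega)]
  ring

theorem stPetersburg_prod_real_two_pow_add_two_pow_lt_add {k ℓ : ℕ} (hkℓ : k ≤ ℓ) (hℓ : 1 ≤ ℓ) :
    (stPetersburg.prod stPetersburg).real {z | 2 ^ k + 2 ^ ℓ < z.1 + z.2} =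
      2⁻¹ ^ ℓ + (1 - 2⁻¹ ^ ℓ) * 2⁻¹ ^ ℓ + 2⁻¹ ^ ℓ *
        (stPetersburg.real (Ioc (2 ^ k) (2 ^ ℓ)) + stPetersburg.real (Ioo (2 ^ k) (2 ^ ℓ))) := by
  rw [prod_real_two_pow_add_two_pow_lt_add ae_stPetersburg_exists_eq_two_pow
    ae_stPetersburg_exists_eq_two_pow hkℓ, stPetersburg_real_Ioi, stPetersburg_real_Iic,
    stPetersburg_real_singleton hℓ]
  ring

theorem stmt_2 {Ω : Type*} [MeasureSpace Ω] [IsProbabilityMeasure (ℙ : Measure Ω)]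
    (X₁ X₂ : Ω → ℝ) (hX₁ : Measurable X₁) (hX₂ : Measurable X₂)
    (hind : IndepFun X₁ X₂ ℙ)
    (hpmf₁ : ∀ k : ℕ, 1 ≤ k → ℙ {ω | X₁ ω = 2 ^ k} = 1 / 2 ^ k)
    (hpmf₂ : ∀ k : ℕ, 1 ≤ k → ℙ {ω | X₂ ω = 2 ^ k} = 1 / 2 ^ k) :
    (∀ k ℓ : ℕ, 1 ≤ k → k < ℓ →
      (ℙ {ω | X₁ ω + X₂ ω > 2 ^ k + 2 ^ ℓ}).toReal
        = 2 / 2 ^ ℓ + 2 / 2 ^ (ℓ + k) - 4 / 2 ^ (2 * ℓ)) ∧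
    (∀ ℓ : ℕ, 1 ≤ ℓ →
      (ℙ {ω | X₁ ω + X₂ ω > 2 ^ ℓ + 2 ^ ℓ}).toReal
        = 2 / 2 ^ ℓ - 1 / 2 ^ (2 * ℓ)) := by
  have hlaw : (ℙ : Measure Ω).map (fun ω => (X₁ ω, X₂ ω)) = stPetersburg.prod stPetersburg := by
    rw [(indepFun_iff_map_prod_eq_prod_map_map hX₁.aemeasurable hX₂.aemeasurable).1 hind,
      map_eq_stPetersburg hX₁ hpmf₁, map_eq_stPetersburg hX₂ hpmf₂]
  have hprob (c : ℝ) : (ℙ {ω | X₁ ω + X₂ ω > c}).toReal =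
      (stPetersburg.prod stPetersburg).real {z | c < z.1 + z.2} := by
    rw [← hlaw, measureReal_def, Measure.map_apply (hX₁.prodMk hX₂)
      (measurableSet_lt measurable_const (by fun_prop))]
    rfl
  refine ⟨fun k ℓ _ hkℓ => ?_, fun ℓ hℓ => ?_⟩
  · rw [hprob, stPetersburg_prod_real_two_pow_add_two_pow_lt_add hkℓ.le (by omega),
      stPetersburg_real_Ioc hkℓ.le, stPetersburg_real_Ioo hkℓ, inv_pow, inv_pow, pow_add,
      pow_mul']
    field_simp
    ring
  · rw [hprob, stPetersburg_prod_real_two_pow_add_two_pow_lt_add le_rfl hℓ, Ioc_self, Ioo_self,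
      measureReal_empty, inv_pow, pow_mul']
    field_simp
    ring
end

section
/- Let X₁, X₂ be independent St. Petersburg random variables. Then the limit as ℓ → ∞ of P{X₁ + X₂ > 2^ℓ}/P{X₁ > 2^ℓ} equals 4, while the limit as ℓ → ∞ of P{X₁ + X₂ > 2^ℓ - 1}/P{X₁ > 2^ℓ - 1} equals 2. -/
/-!
Almost surely each `Xᵢ` is a power of two `2 ^ (k + 1)`, and `P(X ≥ 2 ^ (m + 1)) = 2⁻¹ ^ m`.
For powers of two `a, b` one has `2 ^ ℓ < a + b ↔ 2 ^ ℓ ≤ a ∨ 2 ^ ℓ ≤ b`, so by independence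
`P(X₁ + X₂ > 2 ^ (n + 1)) = 2q - q²` with `q = 2⁻¹ ^ n`, whereas `P(X₁ > 2 ^ (n + 1)) = q / 2`;
the ratio `4 - 2q` tends to `4`. Lowering the threshold to `2 ^ (n + 1) - 1` adds exactly the
atom `X₁ = X₂ = 2 ^ n` of probability `q²`, so the numerator becomes `2q` while
`P(X₁ > 2 ^ (n + 1) - 1) = q`, and the ratio is constantly `2`.
-/

open MeasureTheory ProbabilityTheory Filter Function

lemma two_pow_lt_two_pow_iff_succ_le (ℓ j : ℕ) :
    (2 : ℝ) ^ ℓ < 2 ^ j ↔ (2 : ℝ) ^ (ℓ + 1) ≤ 2 ^ j := by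
  rw [pow_lt_pow_iff_right₀ one_lt_two, pow_le_pow_iff_right₀ one_lt_two]
  omega

lemma two_pow_sub_one_lt_two_pow_iff (ℓ j : ℕ) :
    (2 : ℝ) ^ ℓ - 1 < 2 ^ j ↔ (2 : ℝ) ^ ℓ ≤ 2 ^ j := by
  exact_mod_cast Int.sub_one_lt_iff (m := 2 ^ ℓ) (n := 2 ^ j)

lemma two_pow_lt_two_pow_add_two_pow_iff (ℓ j k : ℕ) :
    (2 : ℝ) ^ ℓ < 2 ^ j + 2 ^ k ↔ (2 : ℝ) ^ ℓ ≤ 2 ^ j ∨ (2 : ℝ) ^ ℓ ≤ 2 ^ k := by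
  have hj₀ : (0 : ℝ) < 2 ^ j := by positivity
  have hk₀ : (0 : ℝ) < 2 ^ k := by positivity
  refine ⟨fun h => ?_, by rintro (h | h) <;> linarith⟩
  by_contra! hlt
  obtain ⟨hj, hk⟩ := hlt
  rw [pow_lt_pow_iff_right₀ one_lt_two] at hj hk
  obtain ⟨n, rfl⟩ : ∃ n, ℓ = n + 1 := ⟨ℓ - 1, by omega⟩
  have hj' : (2 : ℝ) ^ j ≤ 2 ^ n := pow_le_pow_right₀ one_le_two (by omega)
  have hk' : (2 : ℝ) ^ k ≤ 2 ^ n := pow_le_pow_right₀ one_le_two (by omega)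
  linarith [pow_succ (2 : ℝ) n]

lemma two_pow_add_two_pow_eq_two_pow_succ_iff (n j k : ℕ) :
    (2 : ℝ) ^ j + 2 ^ k = 2 ^ (n + 1) ↔ j = n ∧ k = n := by
  refine ⟨fun h => ?_, by rintro ⟨rfl, rfl⟩; ring⟩
  have hj : (2 : ℝ) ^ j ≤ 2 ^ n := by
    rw [← not_lt, two_pow_lt_two_pow_iff_succ_le]
    linarith [(by positivity : (0 : ℝ) < 2 ^ k)]
  have hk : (2 : ℝ) ^ k ≤ 2 ^ n := by
    rw [← not_lt, two_pow_lt_two_pow_iff_succ_le]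
    linarith [(by positivity : (0 : ℝ) < 2 ^ j)]
  have h2 := pow_succ (2 : ℝ) n
  exact ⟨pow_right_injective₀ (zero_lt_two' ℝ) (by norm_num) (by linarith),
    pow_right_injective₀ (zero_lt_two' ℝ) (by norm_num) (by linarith)⟩

lemma two_pow_succ_sub_one_lt_two_pow_add_two_pow_iff (n j k : ℕ) :
    (2 : ℝ) ^ (n + 1) - 1 < 2 ^ j + 2 ^ k ↔
      (2 : ℝ) ^ (n + 1) < 2 ^ j + 2 ^ k ∨ ((2 : ℝ) ^ j = 2 ^ n ∧ (2 : ℝ) ^ k = 2 ^ n) := by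
  have hcast : (2 : ℝ) ^ (n + 1) - 1 < 2 ^ j + 2 ^ k ↔ (2 : ℝ) ^ (n + 1) ≤ 2 ^ j + 2 ^ k := by
    exact_mod_cast Int.sub_one_lt_iff (m := 2 ^ (n + 1)) (n := 2 ^ j + 2 ^ k)
  rw [hcast, le_iff_lt_or_eq, eq_comm, two_pow_add_two_pow_eq_two_pow_succ_iff,
    pow_right_inj₀ two_pos (by norm_num), pow_right_inj₀ two_pos (by norm_num)]

lemma ProbabilityTheory.IndepFun.measureReal_inter_preimage_eq_mul {Ω β γ : Type*}
    [MeasurableSpace Ω] [MeasurableSpace β] [MeasurableSpace γ] {μ : Measure Ω}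
    {X : Ω → β} {Y : Ω → γ} (h : IndepFun X Y μ) {s : Set β} {t : Set γ}
    (hs : MeasurableSet s) (ht : MeasurableSet t) :
    μ.real (X ⁻¹' s ∩ Y ⁻¹' t) = μ.real (X ⁻¹' s) * μ.real (Y ⁻¹' t) := by
  simp only [measureReal_def, h.measure_inter_preimage_eq_mul s t hs ht, ENNReal.toReal_mul]

lemma ProbabilityTheory.IndepFun.measureReal_preimage_union {Ω β γ : Type*} [MeasurableSpace Ω]
    [MeasurableSpace β] [MeasurableSpace γ] {μ : Measure Ω} [IsFiniteMeasure μ]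
    {X : Ω → β} {Y : Ω → γ} (h : IndepFun X Y μ) (hY : Measurable Y) {s : Set β} {t : Set γ}
    (hs : MeasurableSet s) (ht : MeasurableSet t) :
    μ.real (X ⁻¹' s ∪ Y ⁻¹' t) =
      μ.real (X ⁻¹' s) + μ.real (Y ⁻¹' t) - μ.real (X ⁻¹' s) * μ.real (Y ⁻¹' t) := by
  rw [← h.measureReal_inter_preimage_eq_mul hs ht, eq_sub_iff_add_eq,
    measureReal_union_add_inter (hY ht)]

def HasStPetersburgLaw {Ω : Type*} [MeasurableSpace Ω] (X : Ω → ℝ) (μ : Measure Ω) : Prop :=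
  ∀ k : ℕ, 1 ≤ k → μ {ω | X ω = 2 ^ k} = 1 / 2 ^ k

namespace HasStPetersburgLaw

variable {Ω : Type*} [MeasurableSpace Ω] {μ : Measure Ω} {X : Ω → ℝ}

lemma measure_iUnion_eq_two_pow_add_succ (hX : Measurable X) (h : HasStPetersburgLaw X μ)
    (m : ℕ) : μ (⋃ j : ℕ, {ω | X ω = 2 ^ (j + m + 1)}) = 2⁻¹ ^ m := by
  have hdisj : Pairwise (Disjoint on fun j : ℕ => {ω | X ω = (2 : ℝ) ^ (j + m + 1)}) :=
    fun i j hij => Disjoint.preimage X <| Set.disjoint_singleton.2 fun hpow =>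
      hij (by have := (pow_right_inj₀ (zero_lt_two' ℝ) (by norm_num)).1 hpow; omega)
  have hterm (j : ℕ) : μ {ω | X ω = 2 ^ (j + m + 1)} = 2⁻¹ ^ m * 2⁻¹ ^ (j + 1) := by
    rw [h _ (by omega), one_div, ENNReal.inv_pow, ← pow_add]
    ring_nf
  rw [measure_iUnion hdisj fun j => hX (measurableSet_singleton _), tsum_congr hterm,
    ENNReal.tsum_mul_left, ENNReal.tsum_geometric_add_one, ENNReal.one_sub_inv_two,
    ENNReal.mul_inv_cancel (by norm_num) (by norm_num), mul_one]

lemma measureReal_eq_two_pow (h : HasStPetersburgLaw X μ) {n : ℕ} (hn : 1 ≤ n) :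
    μ.real {ω | X ω = 2 ^ n} = 2⁻¹ ^ n := by
  simp [measureReal_def, h n hn]

variable [IsProbabilityMeasure μ]

lemma ae_exists_eq_two_pow (hX : Measurable X) (h : HasStPetersburgLaw X μ) :
    ∀ᵐ ω ∂μ, ∃ j : ℕ, X ω = 2 ^ (j + 1) := by
  have hfull : μ (⋃ j : ℕ, {ω | X ω = 2 ^ (j + 1)}) = 1 := by
    simpa using h.measure_iUnion_eq_two_pow_add_succ hX 0
  have hnull : μ (⋃ j : ℕ, {ω | X ω = 2 ^ (j + 1)})ᶜ = 0 :=
    (prob_compl_eq_zero_iff (.iUnion fun j => hX (measurableSet_singleton _))).2 hfull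
  rw [ae_iff]
  convert hnull using 2
  ext ω
  simp

lemma measureReal_congr_of_two_pow (hX : Measurable X) (h : HasStPetersburgLaw X μ)
    {p q : ℝ → Prop} (hpq : ∀ j : ℕ, p (2 ^ (j + 1)) ↔ q (2 ^ (j + 1))) :
    μ.real {ω | p (X ω)} = μ.real {ω | q (X ω)} := by
  refine measureReal_congr (eventuallyEq_set.2 ?_)
  filter_upwards [h.ae_exists_eq_two_pow hX] with ω ⟨j, hj⟩
  simp only [hj, hpq]

lemma measureReal_two_pow_le (hX : Measurable X) (h : HasStPetersburgLaw X μ)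
    (m : ℕ) : μ.real {ω | 2 ^ (m + 1) ≤ X ω} = 2⁻¹ ^ m := by
  have hunion : {ω | 2 ^ (m + 1) ≤ X ω} =ᵐ[μ] ⋃ j : ℕ, {ω | X ω = 2 ^ (j + m + 1)} := by
    refine eventuallyEq_set.2 ?_
    filter_upwards [h.ae_exists_eq_two_pow hX] with ω ⟨k, hk⟩
    simp only [Set.mem_iUnion, Set.mem_ofPred_eq, hk,
      pow_le_pow_iff_right₀ (by norm_num : (1 : ℝ) < 2),
      pow_right_inj₀ (zero_lt_two' ℝ) (by norm_num : (2 : ℝ) ≠ 1)]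
    exact ⟨fun hk => ⟨k - m, by omega⟩, fun ⟨j, hj⟩ => by omega⟩
  rw [measureReal_congr hunion, measureReal_def, h.measure_iUnion_eq_two_pow_add_succ hX m]
  simp

lemma measureReal_two_pow_lt (hX : Measurable X) (h : HasStPetersburgLaw X μ)
    (ℓ : ℕ) : μ.real {ω | 2 ^ ℓ < X ω} = 2⁻¹ ^ ℓ := by
  rw [← h.measureReal_two_pow_le hX ℓ]
  exact h.measureReal_congr_of_two_pow hX (p := (2 ^ ℓ < ·)) (q := (2 ^ (ℓ + 1) ≤ ·))
    fun j => two_pow_lt_two_pow_iff_succ_le ℓ (j + 1)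

lemma measureReal_two_pow_succ_sub_one_lt (hX : Measurable X) (h : HasStPetersburgLaw X μ)
    (ℓ : ℕ) : μ.real {ω | 2 ^ (ℓ + 1) - 1 < X ω} = 2⁻¹ ^ ℓ := by
  rw [← h.measureReal_two_pow_le hX ℓ]
  exact h.measureReal_congr_of_two_pow hX (p := (2 ^ (ℓ + 1) - 1 < ·)) (q := (2 ^ (ℓ + 1) ≤ ·))
    fun j => two_pow_sub_one_lt_two_pow_iff (ℓ + 1) (j + 1)

variable {X₁ X₂ : Ω → ℝ}

lemma measureReal_two_pow_lt_add (hX₁ : Measurable X₁) (hX₂ : Measurable X₂)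
    (hind : IndepFun X₁ X₂ μ) (h₁ : HasStPetersburgLaw X₁ μ) (h₂ : HasStPetersburgLaw X₂ μ)
    (n : ℕ) : μ.real {ω | 2 ^ (n + 1) < X₁ ω + X₂ ω} = 2 * 2⁻¹ ^ n - (2⁻¹ ^ n) ^ 2 := by
  have hae : ({ω | 2 ^ (n + 1) < X₁ ω + X₂ ω} : Set Ω) =ᵐ[μ]
      (X₁ ⁻¹' Set.Ici (2 ^ (n + 1)) ∪ X₂ ⁻¹' Set.Ici (2 ^ (n + 1)) : Set Ω) := by
    refine eventuallyEq_set.2 ?_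
    filter_upwards [h₁.ae_exists_eq_two_pow hX₁, h₂.ae_exists_eq_two_pow hX₂]
      with ω ⟨j, hj⟩ ⟨k, hk⟩
    simp only [Set.mem_union, Set.mem_preimage, Set.mem_Ici, hj, hk]
    exact two_pow_lt_two_pow_add_two_pow_iff _ _ _
  have htail₁ : μ.real (X₁ ⁻¹' Set.Ici (2 ^ (n + 1))) = 2⁻¹ ^ n := h₁.measureReal_two_pow_le hX₁ n
  have htail₂ : μ.real (X₂ ⁻¹' Set.Ici (2 ^ (n + 1))) = 2⁻¹ ^ n := h₂.measureReal_two_pow_le hX₂ n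
  rw [measureReal_congr hae, hind.measureReal_preimage_union hX₂ measurableSet_Ici
    measurableSet_Ici, htail₁, htail₂]
  ring

lemma measureReal_two_pow_succ_sub_one_lt_add (hX₁ : Measurable X₁) (hX₂ : Measurable X₂)
    (hind : IndepFun X₁ X₂ μ) (h₁ : HasStPetersburgLaw X₁ μ) (h₂ : HasStPetersburgLaw X₂ μ)
    {n : ℕ} (hn : 1 ≤ n) : μ.real {ω | 2 ^ (n + 1) - 1 < X₁ ω + X₂ ω} = 2 * 2⁻¹ ^ n := by
  have hae : ({ω | 2 ^ (n + 1) - 1 < X₁ ω + X₂ ω} : Set Ω) =ᵐ[μ]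
      ({ω | 2 ^ (n + 1) < X₁ ω + X₂ ω} ∪ (X₁ ⁻¹' {2 ^ n} ∩ X₂ ⁻¹' {2 ^ n}) : Set Ω) := by
    refine eventuallyEq_set.2 ?_
    filter_upwards [h₁.ae_exists_eq_two_pow hX₁, h₂.ae_exists_eq_two_pow hX₂]
      with ω ⟨j, hj⟩ ⟨k, hk⟩
    simp only [Set.mem_ofPred_eq, Set.mem_union, Set.mem_inter_iff, Set.mem_preimage,
      Set.mem_singleton_iff, hj, hk]
    exact two_pow_succ_sub_one_lt_two_pow_add_two_pow_iff _ _ _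
  have hdisj : Disjoint {ω | 2 ^ (n + 1) < X₁ ω + X₂ ω} (X₁ ⁻¹' {2 ^ n} ∩ X₂ ⁻¹' {2 ^ n}) := by
    refine Set.disjoint_left.2 fun ω hlt ⟨hω₁, hω₂⟩ => ?_
    simp only [Set.mem_ofPred_eq, Set.mem_preimage, Set.mem_singleton_iff] at hlt hω₁ hω₂
    rw [hω₁, hω₂, ← two_mul, ← pow_succ'] at hlt
    exact lt_irrefl _ hlt
  have hatom₁ : μ.real (X₁ ⁻¹' {2 ^ n}) = 2⁻¹ ^ n := h₁.measureReal_eq_two_pow hn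
  have hatom₂ : μ.real (X₂ ⁻¹' {2 ^ n}) = 2⁻¹ ^ n := h₂.measureReal_eq_two_pow hn
  rw [measureReal_congr hae, measureReal_union hdisj
    ((hX₁ (measurableSet_singleton _)).inter (hX₂ (measurableSet_singleton _))),
    h₁.measureReal_two_pow_lt_add hX₁ hX₂ hind h₂, hind.measureReal_inter_preimage_eq_mul
    (measurableSet_singleton _) (measurableSet_singleton _), hatom₁, hatom₂]
  ring

end HasStPetersburgLaw

theorem stmt_3 {Ω : Type*} [MeasureSpace Ω] [IsProbabilityMeasure (ℙ : Measure Ω)]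
    (X₁ X₂ : Ω → ℝ) (hX₁ : Measurable X₁) (hX₂ : Measurable X₂)
    (hind : IndepFun X₁ X₂ ℙ)
    (hpmf₁ : ∀ k : ℕ, 1 ≤ k → ℙ {ω | X₁ ω = 2 ^ k} = 1 / 2 ^ k)
    (hpmf₂ : ∀ k : ℕ, 1 ≤ k → ℙ {ω | X₂ ω = 2 ^ k} = 1 / 2 ^ k) :
    Tendsto (fun ℓ : ℕ =>
        (ℙ {ω | X₁ ω + X₂ ω > 2 ^ ℓ}).toReal / (ℙ {ω | X₁ ω > 2 ^ ℓ}).toReal)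
      atTop (nhds 4) ∧
    Tendsto (fun ℓ : ℕ =>
        (ℙ {ω | X₁ ω + X₂ ω > 2 ^ ℓ - 1}).toReal / (ℙ {ω | X₁ ω > (2 : ℝ) ^ ℓ - 1}).toReal)
      atTop (nhds 2) := by
  have h₁ : HasStPetersburgLaw X₁ ℙ := hpmf₁
  have h₂ : HasStPetersburgLaw X₂ ℙ := hpmf₂
  simp only [gt_iff_lt, ← measureReal_def]
  constructor
  · refine (tendsto_add_atTop_iff_nat 1).1 ?_
    have hratio (n : ℕ) : (ℙ : Measure Ω).real {ω | 2 ^ (n + 1) < X₁ ω + X₂ ω} /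
        (ℙ : Measure Ω).real {ω | 2 ^ (n + 1) < X₁ ω} = 4 - 2 * 2⁻¹ ^ n := by
      rw [h₁.measureReal_two_pow_lt_add hX₁ hX₂ hind h₂, h₁.measureReal_two_pow_lt hX₁, pow_succ]
      field_simp
      ring
    simp only [hratio]
    simpa using ((tendsto_pow_atTop_nhds_zero_of_lt_one (by norm_num) (by norm_num :
      (2⁻¹ : ℝ) < 1)).const_mul 2).const_sub 4
  · refine (tendsto_add_atTop_iff_nat 1).1 (tendsto_const_nhds.congr' ?_)
    filter_upwards [eventually_ge_atTop 1] with n hn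
    rw [h₁.measureReal_two_pow_succ_sub_one_lt_add hX₁ hX₂ hind h₂ hn,
      h₁.measureReal_two_pow_succ_sub_one_lt hX₁]
    field_simp
end

section
/- Let X^{(k)} be the St. Petersburg variable truncated at 2^k (P{X^{(k)}=2^i}=2^{-i}/(1-2^{-k}), 1 ≤ i ≤ k). Then for all k ≥ 1 and integers ℓ ≥ 2, E(X^{(k)} - E X^{(k)})^ℓ ≤ 2·E(X^{(k)})^ℓ. -/
/-!
For `x, m ≥ 0` one has `(x - m) ^ ℓ ≤ |x - m| ^ ℓ ≤ max x m ^ ℓ ≤ x ^ ℓ + m ^ ℓ`. Applied with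
`x = X ω` and `m = E X` and integrated, this gives `E (X - E X) ^ ℓ ≤ E X ^ ℓ + (E X) ^ ℓ`, and
`(E X) ^ ℓ ≤ E X ^ ℓ` by Jensen's inequality.
-/

open MeasureTheory ProbabilityTheory Real

lemma sub_pow_le_pow_add_pow {x m : ℝ} (hx : 0 ≤ x) (hm : 0 ≤ m) (ℓ : ℕ) :
    (x - m) ^ ℓ ≤ x ^ ℓ + m ^ ℓ := by
  have habs : |x - m| ≤ max x m :=
    abs_sub_le_iff.2 ⟨by linarith [le_max_left x m], by linarith [le_max_right x m]⟩
  calc (x - m) ^ ℓ ≤ |x - m| ^ ℓ := (le_abs_self _).trans (abs_pow _ _).le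
    _ ≤ max x m ^ ℓ := pow_le_pow_left₀ (abs_nonneg _) habs ℓ
    _ ≤ x ^ ℓ + m ^ ℓ := by
      rcases max_choice x m with h | h <;> rw [h] <;>
        linarith [pow_nonneg hx ℓ, pow_nonneg hm ℓ]

section CentralMoment

variable {Ω : Type*} [MeasurableSpace Ω] {P : Measure Ω} [IsProbabilityMeasure P] {X : Ω → ℝ}

lemma pow_integral_le_integral_pow (hX₀ : ∀ᵐ ω ∂P, 0 ≤ X ω) (hX : Integrable X P) (ℓ : ℕ)
    (hXℓ : Integrable (fun ω ↦ X ω ^ ℓ) P) :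
    (∫ ω, X ω ∂P) ^ ℓ ≤ ∫ ω, X ω ^ ℓ ∂P :=
  (convexOn_pow ℓ).map_integral_le (continuousOn_pow ℓ) isClosed_Ici hX₀ hX hXℓ

lemma integral_sub_integral_pow_le_two_mul (hX₀ : ∀ᵐ ω ∂P, 0 ≤ X ω) (hX : Integrable X P)
    (ℓ : ℕ) (hXℓ : Integrable (fun ω ↦ X ω ^ ℓ) P) :
    ∫ ω, (X ω - ∫ ω', X ω' ∂P) ^ ℓ ∂P ≤ 2 * ∫ ω, X ω ^ ℓ ∂P := by
  set m := ∫ ω, X ω ∂P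
  have hm : 0 ≤ m := integral_nonneg_of_ae hX₀
  have hjensen : m ^ ℓ ≤ ∫ ω, X ω ^ ℓ ∂P := pow_integral_le_integral_pow hX₀ hX ℓ hXℓ
  by_cases hc : Integrable (fun ω ↦ (X ω - m) ^ ℓ) P
  · calc ∫ ω, (X ω - m) ^ ℓ ∂P ≤ ∫ ω, (X ω ^ ℓ + m ^ ℓ) ∂P :=
          integral_mono_ae hc (hXℓ.add (integrable_const _)) <| by
            filter_upwards [hX₀] with ω hω using sub_pow_le_pow_add_pow hω hm ℓ
      _ = ∫ ω, X ω ^ ℓ ∂P + m ^ ℓ := by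
          rw [integral_add hXℓ (integrable_const _), integral_const, probReal_univ, one_smul]
      _ ≤ 2 * ∫ ω, X ω ^ ℓ ∂P := by linarith
  · rw [integral_undef hc]
    have : 0 ≤ ∫ ω, X ω ^ ℓ ∂P :=
      integral_nonneg_of_ae (by filter_upwards [hX₀] with ω hω using pow_nonneg hω ℓ)
    linarith

end CentralMoment

theorem stmt_17_general {Ω : Type*} [MeasureSpace Ω] [IsProbabilityMeasure (ℙ : Measure Ω)]
    (k : ℕ) (X : Ω → ℝ) (hX : Measurable X)
    (hsupp : ∀ᵐ ω ∂ℙ, ∃ i : ℕ, 1 ≤ i ∧ i ≤ k ∧ X ω = 2 ^ i) :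
    ∀ ℓ : ℕ, 2 ≤ ℓ →
      (∫ ω, (X ω - ∫ ω', X ω' ∂ℙ) ^ ℓ ∂ℙ) ≤ 2 * ∫ ω, (X ω) ^ ℓ ∂ℙ := by
  intro ℓ _
  have hbd : ∀ᵐ ω ∂ℙ, 0 ≤ X ω ∧ X ω ≤ 2 ^ k := by
    filter_upwards [hsupp] with ω ⟨i, _, hik, hXω⟩
    rw [hXω]
    exact ⟨by positivity, pow_le_pow_right₀ one_le_two hik⟩
  have hXint : Integrable X ℙ :=
    .of_bound hX.aestronglyMeasurable (2 ^ k) <| by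
      filter_upwards [hbd] with ω ⟨h₀, h₁⟩
      rwa [norm_of_nonneg h₀]
  have hXℓint : Integrable (fun ω ↦ X ω ^ ℓ) ℙ :=
    .of_bound (hX.pow_const ℓ).aestronglyMeasurable ((2 ^ k) ^ ℓ) <| by
      filter_upwards [hbd] with ω ⟨h₀, h₁⟩
      rw [norm_of_nonneg (pow_nonneg h₀ ℓ)]
      exact pow_le_pow_left₀ h₀ h₁ ℓ
  exact integral_sub_integral_pow_le_two_mul (hbd.mono fun _ h ↦ h.1) hXint ℓ hXℓint

theorem stmt_17 {Ω : Type*} [MeasureSpace Ω] [IsProbabilityMeasure (ℙ : Measure Ω)]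
    (k : ℕ) (hk : 1 ≤ k) (X : Ω → ℝ) (hX : Measurable X)
    (hpmf : ∀ i : ℕ, 1 ≤ i → i ≤ k →
      (ℙ {ω | X ω = 2 ^ i}).toReal = (2 : ℝ) ^ (-(i : ℤ)) / (1 - 2 ^ (-(k : ℤ))))
    (hsupp : ∀ᵐ ω ∂ℙ, ∃ i : ℕ, 1 ≤ i ∧ i ≤ k ∧ X ω = 2 ^ i) :
    ∀ ℓ : ℕ, 2 ≤ ℓ →
      (∫ ω, (X ω - ∫ ω', X ω' ∂ℙ) ^ ℓ ∂ℙ) ≤ 2 * ∫ ω, (X ω) ^ ℓ ∂ℙ :=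
  stmt_17_general k X hX hsupp
end
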